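/- Define f₀ : ℝ² → ℝ by f₀(θ₁, θ₂) = (7/24 + (cos θ₁ + cos θ₂)/12 + (cos θ₁ · cos θ₂)/24)·(4 − 2cos θ₁ − 2cos θ₂). Then for every θ in the high-frequency set T^H, |1 − (24/25)·f₀(θ)| ≤ 7/25. -/

import Mathlib

/-!
With `c = cos θ₁` and `d = cos θ₂` we have `24 f₀(θ) = (7 + 2c + 2d + cd)(4 − 2c − 2d)`, which is
symmetric in `c, d`. On `T^H` one of the two cosines is nonpositive, and on `[−1, 1] × [−1, 0]`
this polynomial takes values in `[18, 32]` (the extremes are attained at `(1, 0)` and `(−1, −1)`),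
which is exactly `|1 − (24/25) f₀| ≤ 7/25`.
-/

open Real

/-- The high-frequency set `T^H = [−π/2, 3π/2)² \ [−π/2, π/2)²`. -/
def TH : Set (ℝ × ℝ) :=
  (Set.Ico (-(π/2)) (3*π/2) ×ˢ Set.Ico (-(π/2)) (3*π/2)) \
    (Set.Ico (-(π/2)) (π/2) ×ˢ Set.Ico (-(π/2)) (π/2))

noncomputable def f0 (θ : ℝ × ℝ) : ℝ :=
  (7/24 + (Real.cos θ.1 + Real.cos θ.2)/12 + (Real.cos θ.1 * Real.cos θ.2)/24) *
    (4 - 2 * Real.cos θ.1 - 2 * Real.cos θ.2)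

def f0Poly (c d : ℝ) : ℝ := (7 + 2*c + 2*d + c*d) * (4 - 2*c - 2*d)

lemma f0Poly_comm (c d : ℝ) : f0Poly c d = f0Poly d c := by
  unfold f0Poly; ring

lemma f0_eq_f0Poly (θ : ℝ × ℝ) : f0 θ = f0Poly (cos θ.1) (cos θ.2) / 24 := by
  unfold f0 f0Poly; ring

lemma eighteen_le_f0Poly {c d : ℝ} (hc₁ : -1 ≤ c) (hc₂ : c ≤ 1) (hd₁ : -1 ≤ d) (hd₂ : d ≤ 0) :
    18 ≤ f0Poly c d := by
  have hq : 0 ≤ 3 + 2*c + 2*d + c^2 + c*d := by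
    linarith [mul_nonneg (by linarith : (0:ℝ) ≤ d + 1) (by linarith : (0:ℝ) ≤ c + 2),
      sq_nonneg (c + 1/2)]
  have h₁ : 0 ≤ (1 - c) * (2*c + 5) := mul_nonneg (by linarith) (by linarith)
  have h₂ : 0 ≤ (-d) * (3 + 2*c + 2*d + c^2 + c*d) := mul_nonneg (by linarith) hq
  have key : f0Poly c d - 18 =
      2 * ((1 - c) * (2*c + 5)) + 2 * ((-d) * (3 + 2*c + 2*d + c^2 + c*d)) := by
    unfold f0Poly; ring
  linarith

lemma f0Poly_le_thirtytwo {c d : ℝ} (hc : -1 ≤ c) (hd : -1 ≤ d) : f0Poly c d ≤ 32 := by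
  have h : 0 ≤ (c + 1) * (d + 1) * (c + d + 2) :=
    mul_nonneg (mul_nonneg (by linarith) (by linarith)) (by linarith)
  have key : 32 - f0Poly c d = 2 * ((c + 1) * (d + 1) * (c + d + 2)) + 2 * (c - d)^2 := by
    unfold f0Poly; ring
  linarith [sq_nonneg (c - d)]

lemma cos_fst_nonpos_or_cos_snd_nonpos_of_mem_TH {θ : ℝ × ℝ} (hθ : θ ∈ TH) :
    cos θ.1 ≤ 0 ∨ cos θ.2 ≤ 0 := by
  obtain ⟨⟨⟨h₁, h₁'⟩, h₂, h₂'⟩, hlow⟩ := hθ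
  by_contra! hpos
  refine hlow ⟨⟨h₁, ?_⟩, h₂, ?_⟩
  · by_contra! h
    exact (cos_nonpos_of_pi_div_two_le_of_le h (by linarith)).not_gt hpos.1
  · by_contra! h
    exact (cos_nonpos_of_pi_div_two_le_of_le h (by linarith)).not_gt hpos.2

lemma f0Poly_cos_mem_Icc_of_mem_TH {θ : ℝ × ℝ} (hθ : θ ∈ TH) :
    f0Poly (cos θ.1) (cos θ.2) ∈ Set.Icc 18 32 := by
  refine ⟨?_, f0Poly_le_thirtytwo (neg_one_le_cos _) (neg_one_le_cos _)⟩
  rcases cos_fst_nonpos_or_cos_snd_nonpos_of_mem_TH hθ with h | h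
  · rw [f0Poly_comm]
    exact eighteen_le_f0Poly (neg_one_le_cos _) (cos_le_one _) (neg_one_le_cos _) h
  · exact eighteen_le_f0Poly (neg_one_le_cos _) (cos_le_one _) (neg_one_le_cos _) h

theorem stmt_6 : ∀ θ ∈ TH, |1 - (24/25) * f0 θ| ≤ 7/25 := by
  intro θ hθ
  obtain ⟨hlow, hupp⟩ := f0Poly_cos_mem_Icc_of_mem_TH hθ
  rw [f0_eq_f0Poly, abs_le]
  constructor <;> linarith
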